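/- For every connected 2-degenerate graph G on n ≥ 3 vertices, there exists a strongly separating path system for G consisting of exactly n paths such that every edge of G lies in exactly two of the paths, and for each vertex v of G exactly two of the paths have v as an endpoint. -/

import Mathlib

open scoped Classical

/-- A (vertex sequence forming a) path in a graph `G`: a nonempty list of
pairwise distinct vertices in which consecutive vertices are adjacent. -/
def IsPathList {V : Type*} (G : SimpleGraph V) (l : List V) : Prop :=
  l ≠ [] ∧ l.Chain' G.Adj ∧ l.Nodup

/-- The edge `e` occurs on the path given by the list `l`. -/
def edgeMemList {V : Type*} (e : Sym2 V) (l : List V) : Prop :=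
  ∃ p ∈ l.zip l.tail, Sym2.mk p.1 p.2 = e

/-- `P` is a strongly separating path system of `G`. -/
def StronglySeparating {V : Type*} (G : SimpleGraph V) (P : Finset (List V)) : Prop :=
  (∀ l ∈ P, IsPathList G l) ∧
  ∀ e ∈ G.edgeSet, ∀ f ∈ G.edgeSet, e ≠ f →
    (∃ l ∈ P, edgeMemList e l ∧ ¬ edgeMemList f l) ∧
    (∃ l ∈ P, edgeMemList f l ∧ ¬ edgeMemList e l)

/-- The strong separation number: the minimum size of a strongly
separating path system. -/
noncomputable def ssp {V : Type*} (G : SimpleGraph V) : ℕ :=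
  sInf {k | ∃ P : Finset (List V), StronglySeparating G P ∧ P.card = k}

/-- A graph is 2-degenerate if every (induced) subgraph has a vertex of degree at most 2. -/
def TwoDegenerate {V : Type*} (G : SimpleGraph V) : Prop :=
  ∀ S : Set V, S.Nonempty → ∃ v ∈ S, {u | u ∈ S ∧ G.Adj v u}.ncard ≤ 2

/-- `v` is an endpoint of the path given by the list `l`. -/
def IsEndpointOf {V : Type*} (v : V) (l : List V) : Prop :=
  l.head? = some v ∨ l.getLast? = some v

/-!
Induction on vertex sets `s` without isolated vertices in `G[s]`, keeping a system of `|s|` paths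
of `G[s]`, each with at least one edge, such that every edge lies on exactly two paths, every
vertex is an endpoint of exactly two paths, and no two edges share both of their paths (given
the first condition, this is strong separation). Such an `s` either contains an isolated edge
`ac`, which contributes the paths `ac` and `ca`; or a leaf `a` whose neighbour `c` is not a leaf:
extend one path ending at `c` by `a` and add the path `ac`; or, by 2-degeneracy, a vertex `v` with
exactly two neighbours `a ≠ b`: extend a path ending at `a` and a different path ending at `b` by
`v`, and add the path `avb`. In each case the counts can be checked by comparing the new paths
with the ones they replace.
-/

section PathLists

variable {V : Type*} {G : SimpleGraph V} {e : Sym2 V} {l t : List V} {u v x y z a : V}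

lemma isPathList_iff : IsPathList G l ↔ l ≠ [] ∧ l.IsChain G.Adj ∧ l.Nodup := Iff.rfl

@[simp]
lemma not_edgeMemList_nil : ¬ edgeMemList e [] := by
  simp [edgeMemList]

@[simp]
lemma not_edgeMemList_singleton : ¬ edgeMemList e [x] := by
  simp [edgeMemList]

@[simp]
lemma edgeMemList_cons_cons :
    edgeMemList e (x :: y :: l) ↔ e = s(x, y) ∨ edgeMemList e (y :: l) := by
  simp [edgeMemList, eq_comm]

lemma edgeMemList_iff_infix : edgeMemList e l ↔ ∃ x y, [x, y] <:+: l ∧ s(x, y) = e := by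
  induction l with
  | nil => simp
  | cons z l ih =>
    cases l with
    | nil => simp [List.infix_cons_iff]
    | cons w l =>
      rw [edgeMemList_cons_cons, ih]
      simp [List.infix_cons_iff (l₂ := w :: l), or_and_right, exists_or, eq_comm (a := e)]

lemma edgeMemList_reverse : edgeMemList e l.reverse ↔ edgeMemList e l := by
  simp only [edgeMemList_iff_infix]
  constructor <;> rintro ⟨x, y, h, rfl⟩ <;> refine ⟨y, x, ?_, Sym2.eq_swap⟩
  · simpa using List.reverse_infix.2 h
  · simpa using List.reverse_infix.2 h

lemma mem_of_edgeMemList (h : edgeMemList e l) (hx : x ∈ e) : x ∈ l := by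
  obtain ⟨y, z, hl, rfl⟩ := edgeMemList_iff_infix.1 h
  exact hl.subset (by simpa using hx)

lemma isEndpointOf_reverse : IsEndpointOf u l.reverse ↔ IsEndpointOf u l := by
  simp [IsEndpointOf, or_comm]

@[simp]
lemma isEndpointOf_pair : IsEndpointOf u [x, y] ↔ u = x ∨ u = y := by
  simp [IsEndpointOf, eq_comm]

@[simp]
lemma isEndpointOf_triple : IsEndpointOf u [x, y, z] ↔ u = x ∨ u = z := by
  simp [IsEndpointOf, eq_comm]

lemma IsEndpointOf.mem (h : IsEndpointOf u l) : u ∈ l := by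
  rcases h with h | h
  · exact List.mem_of_mem_head? h
  · exact List.mem_of_mem_getLast? h

lemma isPathList_reverse : IsPathList G l.reverse ↔ IsPathList G l := by
  simp [isPathList_iff, List.isChain_reverse, G.adj_comm]

def IsNontrivialPathIn (G : SimpleGraph V) (s : Finset V) (l : List V) : Prop :=
  IsPathList G l ∧ 2 ≤ l.length ∧ ∀ x ∈ l, x ∈ s

lemma IsNontrivialPathIn.mono {s s' : Finset V} (hl : IsNontrivialPathIn G s l) (h : s ⊆ s') :
    IsNontrivialPathIn G s' l :=
  ⟨hl.1, hl.2.1, fun x hx => h (hl.2.2 x hx)⟩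

structure IsExtension (v a : V) (l l' : List V) : Prop where
  mem_iff : ∀ x, x ∈ l' ↔ x = v ∨ x ∈ l
  edgeMemList_iff : ∀ e, edgeMemList e l' ↔ e = s(v, a) ∨ edgeMemList e l
  isEndpointOf_iff : ∀ u, IsEndpointOf u l' ↔ u = v ∨ u ≠ a ∧ IsEndpointOf u l

lemma isExtension_cons (hnd : (a :: t).Nodup) (ht : t ≠ []) :
    IsExtension v a (a :: t) (v :: a :: t) where
  mem_iff _ := List.mem_cons
  edgeMemList_iff _ := edgeMemList_cons_cons
  isEndpointOf_iff u := by
    have hlast : t.getLast ht ≠ a := fun h => (List.nodup_cons.1 hnd).1 (h ▸ t.getLast_mem ht)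
    have hlast' : (a :: t).getLast? = some (t.getLast ht) := by
      rw [List.getLast?_eq_some_getLast (List.cons_ne_nil _ _), List.getLast_cons ht]
    simp only [IsEndpointOf, List.head?_cons, List.getLast?_cons_cons, hlast', Option.some.injEq]
    grind

lemma IsExtension.of_reverse {l' : List V} (h : IsExtension v a l.reverse l') :
    IsExtension v a l l' where
  mem_iff x := by simpa using h.mem_iff x
  edgeMemList_iff e := by simpa [edgeMemList_reverse] using h.edgeMemList_iff e
  isEndpointOf_iff u := by simpa [isEndpointOf_reverse] using h.isEndpointOf_iff u

lemma IsNontrivialPathIn.exists_isExtension {s : Finset V} (hl : IsNontrivialPathIn G s l)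
    (ha : IsEndpointOf a l) (hv : v ∉ s) (hva : G.Adj v a) :
    ∃ l', IsNontrivialPathIn G (insert v s) l' ∧ IsExtension v a l l' := by
  have key (t : List V) (ht : IsNontrivialPathIn G s (a :: t)) :
      ∃ l', IsNontrivialPathIn G (insert v s) l' ∧ IsExtension v a (a :: t) l' := by
    obtain ⟨⟨-, hchain, hnd⟩, hlen, hs⟩ := ht
    have ht : t ≠ [] := by rintro rfl; simp at hlen
    have hext := isExtension_cons (v := v) hnd ht
    refine ⟨v :: a :: t, ⟨?_, by simp, fun x hx => ?_⟩, hext⟩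
    · exact ⟨List.cons_ne_nil _ _, hchain.cons_cons hva,
        List.nodup_cons.2 ⟨fun h => hv (hs v h), hnd⟩⟩
    · rcases (hext.mem_iff x).1 hx with rfl | hx
      exacts [Finset.mem_insert_self _ _, Finset.mem_insert_of_mem (hs x hx)]
  rcases ha with h | h
  · obtain ⟨t, rfl⟩ := List.head?_eq_some_iff.1 h
    exact key t hl
  · obtain ⟨t, ht⟩ := List.head?_eq_some_iff.1 (by rwa [List.head?_reverse])
    obtain ⟨l', hl', hext⟩ := key t <| ht ▸
      ⟨isPathList_reverse.2 hl.1, by simpa using hl.2.1, by simpa using hl.2.2⟩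
    exact ⟨l', hl', (ht ▸ hext : IsExtension v a l.reverse l').of_reverse⟩

end PathLists

section Counting

open Finset

variable {α : Type*} {P P₁ P₂ : Finset α} {x y : α} {R R₁ R₂ A A₁ A₂ : List α}

def CountsReplace (P₁ P₂ : Finset α) (R A : List α) : Prop :=
  ∀ (p : α → Prop) [DecidablePred p], #(P₂.filter p) + R.countP p = #(P₁.filter p) + A.countP p

lemma countsReplace_insert [DecidableEq α] (hx : x ∉ P) : CountsReplace P (insert x P) [] [x] := by
  intro p _
  rw [card_filter, card_filter, sum_insert hx]
  simp [add_comm]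

lemma countsReplace_insert_erase [DecidableEq α] (hx : x ∈ P) (hy : y ∉ P) :
    CountsReplace P (insert y (P.erase x)) [x] [y] := by
  intro p _
  rw [card_filter, card_filter, sum_insert fun h => hy (mem_of_mem_erase h), ← sum_erase_add _ _ hx]
  simp only [List.countP_singleton, decide_eq_true_eq]
  omega

lemma CountsReplace.trans (h₁ : CountsReplace P P₁ R₁ A₁) (h₂ : CountsReplace P₁ P₂ R₂ A₂) :
    CountsReplace P P₂ (R₁ ++ R₂) (A₁ ++ A₂) := by
  intro p _
  have := h₁ p
  have := h₂ p
  simp only [List.countP_append]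
  omega

lemma CountsReplace.card_eq (h : CountsReplace P₁ P₂ R A) : #P₂ + R.length = #P₁ + A.length := by
  simpa using h fun _ => True

lemma exists_mem_and_not_of_card_filter {p q : α → Prop} [DecidablePred p] [DecidablePred q]
    (hp : #(P.filter p) = 2) (hpq : #(P.filter fun l => p l ∧ q l) ≤ 1) :
    ∃ l ∈ P, p l ∧ ¬ q l := by
  by_contra! h
  have : P.filter p ⊆ P.filter fun l => p l ∧ q l :=
    monotone_filter_right P fun l hl hpl => ⟨hpl, h l hl hpl⟩
  have := card_le_card this
  omega

end Counting

section NiceSystems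

open Finset

variable {V : Type*} {G : SimpleGraph V} {s : Finset V} {P : Finset (List V)} {e : Sym2 V}
  {l : List V} {u v a b c : V}

lemma isNontrivialPathIn_pair (hac : G.Adj a c) (ha : a ∈ s) (hc : c ∈ s) :
    IsNontrivialPathIn G s [a, c] := by
  simp [IsNontrivialPathIn, isPathList_iff, hac, G.ne_of_adj hac, ha, hc]

lemma isNontrivialPathIn_triple (hav : G.Adj a v) (hvb : G.Adj v b) (hab : a ≠ b) (ha : a ∈ s)
    (hv : v ∈ s) (hb : b ∈ s) : IsNontrivialPathIn G s [a, v, b] := by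
  simp [IsNontrivialPathIn, isPathList_iff, hav, hvb, G.ne_of_adj hav, G.ne_of_adj hvb, hab, ha,
    hv, hb]

lemma mem_sym2_or_eq_of_mem_sym2_insert (he : e ∈ G.edgeSet) (hes : e ∈ (insert v s).sym2) :
    e ∈ s.sym2 ∨ ∃ y ∈ s, G.Adj v y ∧ e = s(v, y) := by
  induction e using Sym2.ind with
  | _ x y =>
  simp only [mem_sym2_iff, Sym2.mem_iff, forall_eq_or_imp, forall_eq, mem_insert] at hes ⊢
  rw [SimpleGraph.mem_edgeSet] at he
  rcases hes with ⟨rfl | hx, rfl | hy⟩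
  · exact absurd he G.irrefl
  · exact Or.inr ⟨y, hy, he, rfl⟩
  · exact Or.inr ⟨x, hx, he.symm, Sym2.eq_swap⟩
  · exact Or.inl ⟨hx, hy⟩

lemma mem_sym2_or_eq_or_eq_of_mem_sym2_insert (hN : ∀ y ∈ s, G.Adj v y → y = a ∨ y = b)
    (he : e ∈ G.edgeSet) (hes : e ∈ (insert v s).sym2) :
    e ∈ s.sym2 ∨ e = s(v, a) ∨ e = s(v, b) := by
  rcases mem_sym2_or_eq_of_mem_sym2_insert he hes with hes | ⟨y, hy, hvy, rfl⟩
  · exact Or.inl hes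
  · rcases hN y hy hvy with rfl | rfl <;> simp

lemma mem_sym2_or_eq_of_mem_sym2_insert_insert (hNa : ∀ y ∈ s, ¬ G.Adj a y)
    (hNc : ∀ y ∈ s, ¬ G.Adj c y) (he : e ∈ G.edgeSet) (hes : e ∈ (insert a (insert c s)).sym2) :
    e ∈ s.sym2 ∨ e = s(a, c) := by
  rcases mem_sym2_or_eq_of_mem_sym2_insert he hes with hes | ⟨y, hy, hay, rfl⟩
  · rcases mem_sym2_or_eq_of_mem_sym2_insert he hes with hes | ⟨y, hy, hcy, rfl⟩
    exacts [Or.inl hes, absurd hcy (hNc y hy)]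
  · rcases mem_insert.1 hy with rfl | hy
    exacts [Or.inr rfl, absurd hay (hNa y hy)]

lemma ne_of_mem_sym2_of_notMem (he : e ∈ s.sym2) (hv : v ∉ s) (y : V) : e ≠ s(v, y) := by
  rintro rfl
  exact hv (mem_sym2_iff.1 he v (Sym2.mem_mk_left v y))

structure IsNiceSystemOn (G : SimpleGraph V) (s : Finset V) (P : Finset (List V)) : Prop where
  isNontrivialPathIn : ∀ l ∈ P, IsNontrivialPathIn G s l
  card_eq : #P = #s
  card_edgeMemList : ∀ e ∈ G.edgeSet, e ∈ s.sym2 → #(P.filter (edgeMemList e)) = 2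
  card_isEndpointOf : ∀ u ∈ s, #(P.filter (IsEndpointOf u)) = 2
  card_edgeMemList_and_le : ∀ e ∈ G.edgeSet, e ∈ s.sym2 → ∀ f ∈ G.edgeSet, f ∈ s.sym2 → e ≠ f →
    #(P.filter fun l => edgeMemList e l ∧ edgeMemList f l) ≤ 1

lemma isNiceSystemOn_empty : IsNiceSystemOn G ∅ ∅ where
  isNontrivialPathIn := by simp
  card_eq := rfl
  card_edgeMemList e _ he := by
    induction e using Sym2.ind with | _ x y => simp at he
  card_isEndpointOf := by simp
  card_edgeMemList_and_le e _ he := by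
    induction e using Sym2.ind with | _ x y => simp at he

namespace IsNiceSystemOn

attribute [local simp] List.countP_cons

variable {Q Q' Qa Qb Qa' Qb' : List V} {P' : Finset (List V)}

lemma notMem (hP : IsNiceSystemOn G s P) (hv : v ∉ s) (hl : l ∈ P) : v ∉ l :=
  fun h => hv ((hP.isNontrivialPathIn l hl).2.2 v h)

lemma not_edgeMemList (hP : IsNiceSystemOn G s P) (hv : v ∉ s) (hl : l ∈ P) (hve : v ∈ e) :
    ¬ edgeMemList e l :=
  fun h => hP.notMem hv hl (mem_of_edgeMemList h hve)

lemma not_isEndpointOf (hP : IsNiceSystemOn G s P) (hv : v ∉ s) (hl : l ∈ P) :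
    ¬ IsEndpointOf v l :=
  fun h => hP.notMem hv hl h.mem

lemma notMem_of_isExtension (hP : IsNiceSystemOn G s P) (hv : v ∉ s) (hQ' : IsExtension v a Q Q') :
    Q' ∉ P :=
  fun h => hP.notMem hv h ((hQ'.mem_iff v).2 (Or.inl rfl))

lemma card_filter_eq_zero (hP : IsNiceSystemOn G s P) (hv : v ∉ s) {p : List V → Prop}
    [DecidablePred p] (hp : ∀ l, p l → v ∈ l) : #(P.filter p) = 0 :=
  card_eq_zero.2 (filter_eq_empty_iff.2 fun l hl hpl => hP.notMem hv hl (hp l hpl))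

lemma card_filter_and_edgeMemList_eq_zero (hP : IsNiceSystemOn G s P) (hv : v ∉ s) (hve : v ∈ e)
    (q : List V → Prop) : #(P.filter fun l => q l ∧ edgeMemList e l) = 0 :=
  hP.card_filter_eq_zero hv fun l (hl : q l ∧ edgeMemList e l) => mem_of_edgeMemList hl.2 hve

lemma card_filter_edgeMemList_and_eq_zero (hP : IsNiceSystemOn G s P) (hv : v ∉ s) (hve : v ∈ e)
    (q : List V → Prop) : #(P.filter fun l => edgeMemList e l ∧ q l) = 0 :=
  hP.card_filter_eq_zero hv fun l (hl : edgeMemList e l ∧ q l) => mem_of_edgeMemList hl.1 hve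

lemma exists_isExtension (hP : IsNiceSystemOn G s P) (hu : u ∈ s) (hv : v ∉ s) (hvu : G.Adj v u)
    (l₀ : List V) : ∃ Q ∈ P, Q ≠ l₀ ∧ IsEndpointOf u Q ∧
      ∃ Q', IsNontrivialPathIn G (insert v s) Q' ∧ IsExtension v u Q Q' := by
  obtain ⟨Q, hQ, hne⟩ := exists_mem_ne (by rw [hP.card_isEndpointOf u hu]; norm_num) l₀
  obtain ⟨hQ, huQ⟩ := mem_filter.1 hQ
  exact ⟨Q, hQ, hne, huQ, (hP.isNontrivialPathIn Q hQ).exists_isExtension huQ hv hvu⟩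

lemma insert_isolated_edge_of_countsReplace (hP : IsNiceSystemOn G s P) (ha : a ∉ s) (hc : c ∉ s)
    (hac : G.Adj a c) (hNa : ∀ y ∈ s, ¬ G.Adj a y) (hNc : ∀ y ∈ s, ¬ G.Adj c y)
    (hpaths : ∀ l ∈ P', IsNontrivialPathIn G (insert a (insert c s)) l)
    (hR : CountsReplace P P' [] [[c, a], [a, c]]) :
    IsNiceSystemOn G (insert a (insert c s)) P' := by
  have hne := G.ne_of_adj hac
  have hedge (e : Sym2 V) (he : e ∈ G.edgeSet) (hes : e ∈ (insert a (insert c s)).sym2) :=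
    mem_sym2_or_eq_of_mem_sym2_insert_insert hNa hNc he hes
  have hold (e : Sym2 V) (hes : e ∈ s.sym2) : e ≠ s(a, c) ∧ e ≠ s(c, a) :=
    ⟨ne_of_mem_sym2_of_notMem hes ha c, ne_of_mem_sym2_of_notMem hes hc a⟩
  refine ⟨hpaths, ?_, fun e he hes => ?_, fun u hu => ?_, fun e he hes f hf hfs hef => ?_⟩
  · have := hR.card_eq
    have hacs : a ∉ insert c s := by simp [hne, ha]
    rw [card_insert_of_notMem hacs, card_insert_of_notMem hc, ← hP.card_eq]
    simp only [List.length_cons, List.length_nil] at this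
    omega
  · have := hR (edgeMemList e)
    rcases hedge e he hes with hes | rfl
    · simp [hold e hes, hP.card_edgeMemList e he hes] at this
      omega
    · simp [Sym2.eq_swap, -card_eq_zero,
        hP.card_filter_eq_zero ha fun l hl => mem_of_edgeMemList hl (Sym2.mem_mk_left a c)] at this
      omega
  · have := hR (IsEndpointOf u)
    rcases mem_insert.1 hu with rfl | hu
    · simp [hne, -card_eq_zero, hP.card_filter_eq_zero ha fun l => IsEndpointOf.mem] at this
      omega
    rcases mem_insert.1 hu with rfl | hu
    · simp [hne.symm, -card_eq_zero, hP.card_filter_eq_zero hc fun l => IsEndpointOf.mem] at this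
      omega
    · have hua : u ≠ a := fun h => ha (h ▸ hu)
      have huc : u ≠ c := fun h => hc (h ▸ hu)
      simp [hP.card_isEndpointOf u hu, hua, huc] at this
      omega
  · have := hR fun l => edgeMemList e l ∧ edgeMemList f l
    rcases hedge e he hes with hes | rfl <;> rcases hedge f hf hfs with hfs | rfl
    · simp [hold e hes, hold f hfs] at this
      have := hP.card_edgeMemList_and_le e he hes f hf hfs hef
      omega
    · simp [hold e hes, hP.card_filter_and_edgeMemList_eq_zero ha (Sym2.mem_mk_left a c),
        -card_eq_zero] at this
      omega
    · simp [hold f hfs, hP.card_filter_edgeMemList_and_eq_zero ha (Sym2.mem_mk_left a c),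
        -card_eq_zero] at this
      omega
    · exact absurd rfl hef

lemma insert_isolated_edge (hP : IsNiceSystemOn G s P) (ha : a ∉ s) (hc : c ∉ s)
    (hac : G.Adj a c) (hNa : ∀ y ∈ s, ¬ G.Adj a y) (hNc : ∀ y ∈ s, ¬ G.Adj c y) :
    ∃ P', IsNiceSystemOn G (insert a (insert c s)) P' := by
  have hcaP : [c, a] ∉ P := fun h => hP.notMem ha h (by simp)
  have hacP : [a, c] ∉ insert [c, a] P := by
    simpa [G.ne_of_adj hac] using fun h => hP.notMem ha h (by simp)
  refine ⟨_, hP.insert_isolated_edge_of_countsReplace ha hc hac hNa hNc ?_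
    ((countsReplace_insert hcaP).trans (countsReplace_insert hacP))⟩
  simp only [mem_insert]
  rintro l (rfl | rfl | hl)
  · exact isNontrivialPathIn_pair hac (by simp) (by simp)
  · exact isNontrivialPathIn_pair hac.symm (by simp) (by simp)
  · exact (hP.isNontrivialPathIn l hl).mono ((subset_insert c s).trans (subset_insert a _))

lemma insert_leaf_of_countsReplace (hP : IsNiceSystemOn G s P) (ha : a ∉ s) (hc : c ∈ s)
    (hN : ∀ y ∈ s, G.Adj a y → y = c) (hQ : Q ∈ P) (hcQ : IsEndpointOf c Q)
    (hQ' : IsExtension a c Q Q') (hpaths : ∀ l ∈ P', IsNontrivialPathIn G (insert a s) l)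
    (hR : CountsReplace P P' [Q] [Q', [a, c]]) : IsNiceSystemOn G (insert a s) P' := by
  have hca : c ≠ a := fun h => ha (h ▸ hc)
  have hedge (e : Sym2 V) (he : e ∈ G.edgeSet) (hes : e ∈ (insert a s).sym2) :
      e ∈ s.sym2 ∨ e = s(a, c) := by
    rcases mem_sym2_or_eq_of_mem_sym2_insert he hes with hes | ⟨y, hy, hay, rfl⟩
    exacts [Or.inl hes, Or.inr (by rw [hN y hy hay])]
  have hacQ : ¬ edgeMemList s(a, c) Q := hP.not_edgeMemList ha hQ (Sym2.mem_mk_left a c)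
  refine ⟨hpaths, ?_, fun e he hes => ?_, fun u hu => ?_, fun e he hes f hf hfs hef => ?_⟩
  · have := hR.card_eq
    simp only [List.length_cons] at this
    rw [card_insert_of_notMem ha, ← hP.card_eq]
    omega
  · have := hR (edgeMemList e)
    rcases hedge e he hes with hes | rfl
    · simp [hQ'.edgeMemList_iff, ne_of_mem_sym2_of_notMem hes ha,
        hP.card_edgeMemList e he hes] at this
      omega
    · simp [hQ'.edgeMemList_iff, hacQ, -card_eq_zero,
        hP.card_filter_eq_zero ha fun l hl => mem_of_edgeMemList hl (Sym2.mem_mk_left a c)] at this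
      omega
  · have := hR (IsEndpointOf u)
    rcases mem_insert.1 hu with rfl | hu
    · simp [hQ'.isEndpointOf_iff, hP.not_isEndpointOf ha hQ, -card_eq_zero,
        hP.card_filter_eq_zero ha fun l => IsEndpointOf.mem] at this
      omega
    rcases eq_or_ne u c with rfl | huc
    · simp [hQ'.isEndpointOf_iff, hcQ, hca, hP.card_isEndpointOf u hu] at this
      omega
    · have hua : u ≠ a := fun h => ha (h ▸ hu)
      simp [hQ'.isEndpointOf_iff, hua, huc, hP.card_isEndpointOf u hu] at this
      omega
  · have := hR fun l => edgeMemList e l ∧ edgeMemList f l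
    rcases hedge e he hes with hes | rfl <;> rcases hedge f hf hfs with hfs | rfl
    · simp [hQ'.edgeMemList_iff, ne_of_mem_sym2_of_notMem hes ha,
        ne_of_mem_sym2_of_notMem hfs ha] at this
      have := hP.card_edgeMemList_and_le e he hes f hf hfs hef
      omega
    · simp [hQ'.edgeMemList_iff, ne_of_mem_sym2_of_notMem hes ha, hacQ, -card_eq_zero,
        hP.card_filter_and_edgeMemList_eq_zero ha (Sym2.mem_mk_left a c)] at this
      split_ifs at this <;> omega
    · simp [hQ'.edgeMemList_iff, ne_of_mem_sym2_of_notMem hfs ha, hacQ, -card_eq_zero,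
        hP.card_filter_edgeMemList_and_eq_zero ha (Sym2.mem_mk_left a c)] at this
      split_ifs at this <;> omega
    · exact absurd rfl hef

lemma insert_leaf (hP : IsNiceSystemOn G s P) (ha : a ∉ s) (hc : c ∈ s) (hac : G.Adj a c)
    (hN : ∀ y ∈ s, G.Adj a y → y = c) : ∃ P', IsNiceSystemOn G (insert a s) P' := by
  obtain ⟨Q, hQ, -, hcQ, Q', hQ'path, hQ'⟩ := hP.exists_isExtension hc ha hac []
  have hQ'P := hP.notMem_of_isExtension ha hQ'
  have hacQ' : [a, c] ∉ insert Q' (P.erase Q) := by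
    simp only [mem_insert, mem_erase, not_or, not_and]
    refine ⟨fun h => ?_, fun _ h => hP.notMem ha h (by simp)⟩
    subst h
    simpa [(G.ne_of_adj hac).symm] using hQ'.isEndpointOf_iff c
  refine ⟨_, hP.insert_leaf_of_countsReplace ha hc hN hQ hcQ hQ' ?_
    ((countsReplace_insert_erase hQ hQ'P).trans (countsReplace_insert hacQ'))⟩
  simp only [mem_insert, mem_erase]
  rintro l (rfl | rfl | ⟨-, hl⟩)
  · exact isNontrivialPathIn_pair hac (mem_insert_self a s) (mem_insert_of_mem hc)
  · exact hQ'path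
  · exact (hP.isNontrivialPathIn l hl).mono (subset_insert a s)

lemma card_edgeMemList_of_countsReplace_two_extensions (hP : IsNiceSystemOn G s P) (hv : v ∉ s)
    (hab : a ≠ b) (hN : ∀ y ∈ s, G.Adj v y → y = a ∨ y = b) (hQa : Qa ∈ P) (hQb : Qb ∈ P)
    (hQa' : IsExtension v a Qa Qa') (hQb' : IsExtension v b Qb Qb')
    (hR : CountsReplace P P' [Qa, Qb] [Qa', Qb', [a, v, b]]) (he : e ∈ G.edgeSet)
    (hes : e ∈ (insert v s).sym2) : #(P'.filter (edgeMemList e)) = 2 := by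
  have hvavb : s(v, a) ≠ s(v, b) := fun h => hab (Sym2.congr_right.1 h)
  have := hR (edgeMemList e)
  rcases mem_sym2_or_eq_or_eq_of_mem_sym2_insert hN he hes with hes | rfl | rfl
  · simp [hQa'.edgeMemList_iff, hQb'.edgeMemList_iff, Sym2.eq_swap (a := a) (b := v),
      ne_of_mem_sym2_of_notMem hes hv, hP.card_edgeMemList e he hes] at this
    omega
  all_goals
    simp [hQa'.edgeMemList_iff, hQb'.edgeMemList_iff, Sym2.eq_swap (a := a) (b := v), hvavb,
      hvavb.symm, hP.not_edgeMemList hv hQa, hP.not_edgeMemList hv hQb, -card_eq_zero,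
      hP.card_filter_eq_zero hv fun l hl => mem_of_edgeMemList hl (Sym2.mem_mk_left v _)] at this
    omega

lemma card_isEndpointOf_of_countsReplace_two_extensions (hP : IsNiceSystemOn G s P) (hv : v ∉ s)
    (ha : a ∈ s) (hb : b ∈ s) (hab : a ≠ b) (hQa : Qa ∈ P) (hQb : Qb ∈ P)
    (haQa : IsEndpointOf a Qa) (hbQb : IsEndpointOf b Qb) (hQa' : IsExtension v a Qa Qa')
    (hQb' : IsExtension v b Qb Qb') (hR : CountsReplace P P' [Qa, Qb] [Qa', Qb', [a, v, b]])
    (hu : u ∈ insert v s) : #(P'.filter (IsEndpointOf u)) = 2 := by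
  have hav : a ≠ v := fun h => hv (h ▸ ha)
  have hbv : b ≠ v := fun h => hv (h ▸ hb)
  have := hR (IsEndpointOf u)
  rcases mem_insert.1 hu with rfl | hu
  · simp [hQa'.isEndpointOf_iff, hQb'.isEndpointOf_iff, hav.symm, hbv.symm,
      hP.not_isEndpointOf hv hQa, hP.not_isEndpointOf hv hQb, -card_eq_zero,
      hP.card_filter_eq_zero hv fun l => IsEndpointOf.mem] at this
    omega
  have huv : u ≠ v := fun h => hv (h ▸ hu)
  rcases eq_or_ne u a with rfl | hua
  · simp [hQa'.isEndpointOf_iff, hQb'.isEndpointOf_iff, haQa, hab, huv,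
      hP.card_isEndpointOf u hu] at this
    omega
  rcases eq_or_ne u b with rfl | hub
  · simp [hQa'.isEndpointOf_iff, hQb'.isEndpointOf_iff, hbQb, hua, huv,
      hP.card_isEndpointOf u hu] at this
    omega
  · simp [hQa'.isEndpointOf_iff, hQb'.isEndpointOf_iff, hua, hub, huv,
      hP.card_isEndpointOf u hu] at this
    omega

lemma card_edgeMemList_and_le_of_countsReplace_two_extensions (hP : IsNiceSystemOn G s P)
    (hv : v ∉ s) (hab : a ≠ b) (hN : ∀ y ∈ s, G.Adj v y → y = a ∨ y = b) (hQa : Qa ∈ P)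
    (hQb : Qb ∈ P) (hQa' : IsExtension v a Qa Qa') (hQb' : IsExtension v b Qb Qb')
    (hR : CountsReplace P P' [Qa, Qb] [Qa', Qb', [a, v, b]]) {f : Sym2 V} (he : e ∈ G.edgeSet)
    (hes : e ∈ (insert v s).sym2) (hf : f ∈ G.edgeSet) (hfs : f ∈ (insert v s).sym2)
    (hef : e ≠ f) : #(P'.filter fun l => edgeMemList e l ∧ edgeMemList f l) ≤ 1 := by
  have hvavb : s(v, a) ≠ s(v, b) := fun h => hab (Sym2.congr_right.1 h)
  have := hR fun l => edgeMemList e l ∧ edgeMemList f l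
  simp only [List.countP_cons, List.countP_nil, decide_eq_true_eq, hQa'.edgeMemList_iff,
    hQb'.edgeMemList_iff, edgeMemList_cons_cons, not_edgeMemList_singleton, or_false,
    Sym2.eq_swap (a := a) (b := v)] at this
  have hfresh (y : V) : ¬ edgeMemList s(v, y) Qa ∧ ¬ edgeMemList s(v, y) Qb :=
    ⟨hP.not_edgeMemList hv hQa (Sym2.mem_mk_left v y),
      hP.not_edgeMemList hv hQb (Sym2.mem_mk_left v y)⟩
  have hzero (y : V) := hP.card_filter_and_edgeMemList_eq_zero hv (Sym2.mem_mk_left v y)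
  have hzero' (y : V) := hP.card_filter_edgeMemList_and_eq_zero hv (Sym2.mem_mk_left v y)
  rcases mem_sym2_or_eq_or_eq_of_mem_sym2_insert hN he hes with hes | rfl | rfl <;>
    rcases mem_sym2_or_eq_or_eq_of_mem_sym2_insert hN hf hfs with hfs | rfl | rfl
  · have := hP.card_edgeMemList_and_le e he hes f hf hfs hef
    simp [ne_of_mem_sym2_of_notMem hes hv, ne_of_mem_sym2_of_notMem hfs hv] at *
    omega
  · simp [ne_of_mem_sym2_of_notMem hes hv, hvavb, hzero, -card_eq_zero] at this
    split_ifs at this <;> omega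
  · simp [ne_of_mem_sym2_of_notMem hes hv, hvavb.symm, hzero, -card_eq_zero] at this
    split_ifs at this <;> omega
  · simp [ne_of_mem_sym2_of_notMem hfs hv, hvavb, hzero', -card_eq_zero] at this
    split_ifs at this <;> omega
  · exact absurd rfl hef
  · simp [hvavb, hvavb.symm, hfresh, hzero, -card_eq_zero] at this
    omega
  · simp [ne_of_mem_sym2_of_notMem hfs hv, hvavb.symm, hzero', -card_eq_zero] at this
    split_ifs at this <;> omega
  · simp [hvavb, hvavb.symm, hfresh, hzero, -card_eq_zero] at this
    omega
  · exact absurd rfl hef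

lemma insert_of_two_neighbors (hP : IsNiceSystemOn G s P) (hv : v ∉ s) (ha : a ∈ s)
    (hb : b ∈ s) (hab : a ≠ b) (hva : G.Adj v a) (hvb : G.Adj v b)
    (hN : ∀ y ∈ s, G.Adj v y → y = a ∨ y = b) : ∃ P', IsNiceSystemOn G (insert v s) P' := by
  obtain ⟨Qa, hQa, -, haQa, Qa', hQa'path, hQa'⟩ := hP.exists_isExtension ha hv hva []
  obtain ⟨Qb, hQb, hQba, hbQb, Qb', hQb'path, hQb'⟩ := hP.exists_isExtension hb hv hvb Qa
  have hQbP₁ : Qb ∈ insert Qa' (P.erase Qa) := mem_insert_of_mem (mem_erase.2 ⟨hQba, hQb⟩)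
  have hQb'P₁ : Qb' ∉ insert Qa' (P.erase Qa) := by
    simp only [mem_insert, mem_erase, not_or, not_and]
    refine ⟨fun h => ?_, fun _ => hP.notMem_of_isExtension hv hQb'⟩
    subst h
    simpa [hQa'.edgeMemList_iff, hab, (G.ne_of_adj hva).symm, hP.not_edgeMemList hv hQb] using
      hQb'.edgeMemList_iff s(v, a)
  have hNP₂ : [a, v, b] ∉ insert Qb' ((insert Qa' (P.erase Qa)).erase Qb) := by
    have hvN : ¬ IsEndpointOf v [a, v, b] := by
      simp [(G.ne_of_adj hva), (G.ne_of_adj hvb)]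
    simp only [mem_insert, mem_erase, not_or, not_and]
    refine ⟨fun h => hvN ?_, fun _ => ⟨fun h => hvN ?_, fun _ h => hP.notMem hv h (by simp)⟩⟩
    · exact h ▸ (hQb'.isEndpointOf_iff v).2 (Or.inl rfl)
    · exact h ▸ (hQa'.isEndpointOf_iff v).2 (Or.inl rfl)
  have hR : CountsReplace P _ [Qa, Qb] [Qa', Qb', [a, v, b]] :=
    ((countsReplace_insert_erase hQa (hP.notMem_of_isExtension hv hQa')).trans
      (countsReplace_insert_erase hQbP₁ hQb'P₁)).trans (countsReplace_insert hNP₂)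
  refine ⟨insert [a, v, b] (insert Qb' ((insert Qa' (P.erase Qa)).erase Qb)), ?_, ?_,
    fun e he hes => ?_, fun u hu => ?_, fun e he hes f hf hfs hef => ?_⟩
  · simp only [mem_insert, mem_erase]
    rintro l (rfl | rfl | ⟨-, rfl | ⟨-, hl⟩⟩)
    · exact isNontrivialPathIn_triple hva.symm hvb hab (by simp [ha]) (by simp) (by simp [hb])
    · exact hQb'path
    · exact hQa'path
    · exact (hP.isNontrivialPathIn l hl).mono (subset_insert v s)
  · have := hR.card_eq
    simp only [List.length_cons, List.length_nil] at this
    rw [card_insert_of_notMem hv, ← hP.card_eq]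
    omega
  · exact hP.card_edgeMemList_of_countsReplace_two_extensions hv hab hN hQa hQb hQa' hQb' hR he hes
  · exact hP.card_isEndpointOf_of_countsReplace_two_extensions hv ha hb hab hQa hQb haQa hbQb
      hQa' hQb' hR hu
  · exact hP.card_edgeMemList_and_le_of_countsReplace_two_extensions hv hab hN hQa hQb hQa' hQb'
      hR he hes hf hfs hef

lemma stronglySeparating [Fintype V] (hP : IsNiceSystemOn G univ P) : StronglySeparating G P := by
  refine ⟨fun l hl => (hP.isNontrivialPathIn l hl).1, fun e he f hf hef => ⟨?_, ?_⟩⟩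
  · exact exists_mem_and_not_of_card_filter (hP.card_edgeMemList e he (by simp))
      (hP.card_edgeMemList_and_le e he (by simp) f hf (by simp) hef)
  · exact exists_mem_and_not_of_card_filter (hP.card_edgeMemList f hf (by simp))
      (hP.card_edgeMemList_and_le f hf (by simp) e he (by simp) hef.symm)

end IsNiceSystemOn

def NoIsolatedIn (G : SimpleGraph V) (s : Finset V) : Prop :=
  ∀ x ∈ s, ∃ y ∈ s, G.Adj x y

lemma eq_of_card_filter_adj_eq_one {x y : V} (h : #(s.filter (G.Adj x)) = 1) (hy : y ∈ s)
    (hxy : G.Adj x y) : ∀ z ∈ s, G.Adj x z → z = y := fun z hz hxz =>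
  card_le_one.1 h.le z (mem_filter.2 ⟨hz, hxz⟩) y (mem_filter.2 ⟨hy, hxy⟩)

lemma exists_adj_mem_erase (h : 1 < #(s.filter (G.Adj u))) (v : V) :
    ∃ y ∈ s.erase v, G.Adj u y := by
  obtain ⟨y, hy, hyv⟩ := exists_mem_ne h v
  rw [mem_filter] at hy
  exact ⟨y, mem_erase.2 ⟨hyv, hy.1⟩, hy.2⟩

lemma TwoDegenerate.exists_card_filter_adj_le (hG : TwoDegenerate G) (hs : s.Nonempty) :
    ∃ v ∈ s, #(s.filter (G.Adj v)) ≤ 2 := by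
  obtain ⟨v, hv, h⟩ := hG s (by simpa using hs)
  refine ⟨v, hv, ?_⟩
  rwa [show {u | u ∈ (s : Set V) ∧ G.Adj v u} = (s.filter (G.Adj v) : Set V) by ext; simp,
    Set.ncard_coe_finset] at h

lemma exists_isNiceSystemOn_of_leaf (ih : ∀ t ⊂ s, NoIsolatedIn G t → ∃ P, IsNiceSystemOn G t P)
    (hs : NoIsolatedIn G s) (ha : a ∈ s) (hdeg : #(s.filter (G.Adj a)) = 1) :
    ∃ P, IsNiceSystemOn G s P := by
  obtain ⟨c, hc, hac⟩ := hs a ha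
  have hNa := eq_of_card_filter_adj_eq_one hdeg hc hac
  have hca : c ≠ a := (G.ne_of_adj hac).symm
  by_cases hdegc : #(s.filter (G.Adj c)) = 1
  · have hNc := eq_of_card_filter_adj_eq_one hdegc ha hac.symm
    have hs' : NoIsolatedIn G ((s.erase a).erase c) := fun x hx => by
      obtain ⟨hxc, hxa, hx⟩ : x ≠ c ∧ x ≠ a ∧ x ∈ s := by simpa using hx
      obtain ⟨y, hy, hxy⟩ := hs x hx
      have hya : y ≠ a := fun h => hxc (hNa x hx (h ▸ hxy.symm))
      have hyc : y ≠ c := fun h => hxa (hNc x hx (h ▸ hxy.symm))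
      exact ⟨y, by simp [hya, hyc, hy], hxy⟩
    obtain ⟨P, hP⟩ := ih _ ((erase_subset c _).trans_ssubset (erase_ssubset ha)) hs'
    rw [← insert_erase ha, ← insert_erase (mem_erase.2 ⟨hca, hc⟩)]
    exact hP.insert_isolated_edge (by simp) (by simp) hac
      (fun y hy hay => by simp [hNa y (mem_of_mem_erase (mem_of_mem_erase hy)) hay] at hy)
      (fun y hy hcy => by simp [hNc y (mem_of_mem_erase (mem_of_mem_erase hy)) hcy] at hy)
  · have hc2 : 1 < #(s.filter (G.Adj c)) := by
      have := card_pos.2 ⟨a, mem_filter.2 ⟨ha, hac.symm⟩⟩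
      omega
    have hs' : NoIsolatedIn G (s.erase a) := fun x hx => by
      obtain ⟨y, hy, hxy⟩ := hs x (mem_of_mem_erase hx)
      rcases eq_or_ne y a with rfl | hya
      · rw [hNa x (mem_of_mem_erase hx) hxy.symm]
        exact exists_adj_mem_erase hc2 y
      · exact ⟨y, mem_erase.2 ⟨hya, hy⟩, hxy⟩
    obtain ⟨P, hP⟩ := ih _ (erase_ssubset ha) hs'
    rw [← insert_erase ha]
    exact hP.insert_leaf (notMem_erase a s) (mem_erase.2 ⟨hca, hc⟩) hac
      fun y hy hay => hNa y (mem_of_mem_erase hy) hay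

lemma exists_isNiceSystemOn_of_two_le (hG : TwoDegenerate G)
    (ih : ∀ t ⊂ s, NoIsolatedIn G t → ∃ P, IsNiceSystemOn G t P) (hne : s.Nonempty)
    (hdeg : ∀ x ∈ s, 2 ≤ #(s.filter (G.Adj x))) : ∃ P, IsNiceSystemOn G s P := by
  obtain ⟨v, hv, hdegv⟩ := hG.exists_card_filter_adj_le hne
  obtain ⟨a, b, hab, hvab⟩ := card_eq_two.1 (le_antisymm hdegv (hdeg v hv))
  have hN (y : V) : y ∈ s ∧ G.Adj v y ↔ y = a ∨ y = b := by
    rw [← mem_filter, hvab, mem_insert, mem_singleton]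
  have ha := (hN a).2 (Or.inl rfl)
  have hb := (hN b).2 (Or.inr rfl)
  obtain ⟨P, hP⟩ := ih (s.erase v) (erase_ssubset hv) fun x hx =>
    exists_adj_mem_erase (hdeg x (mem_of_mem_erase hx)) v
  rw [← insert_erase hv]
  exact hP.insert_of_two_neighbors (notMem_erase v s)
    (mem_erase.2 ⟨(G.ne_of_adj ha.2).symm, ha.1⟩) (mem_erase.2 ⟨(G.ne_of_adj hb.2).symm, hb.1⟩)
    hab ha.2 hb.2 fun y hy hvy => (hN y).1 ⟨mem_of_mem_erase hy, hvy⟩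

lemma exists_isNiceSystemOn (hG : TwoDegenerate G) (s : Finset V) (hs : NoIsolatedIn G s) :
    ∃ P, IsNiceSystemOn G s P := by
  induction s using Finset.strongInduction with
  | H s ih =>
  rcases s.eq_empty_or_nonempty with rfl | hne
  · exact ⟨∅, isNiceSystemOn_empty⟩
  by_cases hleaf : ∃ a ∈ s, #(s.filter (G.Adj a)) = 1
  · obtain ⟨a, ha, hdeg⟩ := hleaf
    exact exists_isNiceSystemOn_of_leaf ih hs ha hdeg
  · refine exists_isNiceSystemOn_of_two_le hG ih hne fun x hx => ?_
    obtain ⟨y, hy, hxy⟩ := hs x hx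
    have := card_pos.2 ⟨y, mem_filter.2 ⟨hy, hxy⟩⟩
    have : #(s.filter (G.Adj x)) ≠ 1 := fun h => hleaf ⟨x, hx, h⟩
    omega

end NiceSystems

/-- every connected 2-degenerate graph on `n ≥ 3` vertices has a
strongly separating path system with exactly `n` paths in which every edge lies
in exactly two paths and every vertex is an endpoint of exactly two paths. -/
theorem exists_nice_ssp_of_twoDegenerate {V : Type*} [Fintype V]
    (G : SimpleGraph V) (hG : TwoDegenerate G) (hconn : G.Connected)
    (hn : 3 ≤ Fintype.card V) :
    ∃ P : Finset (List V), StronglySeparating G P ∧ P.card = Fintype.card V ∧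
      (∀ e ∈ G.edgeSet, (P.filter fun l => edgeMemList e l).card = 2) ∧
      (∀ v : V, (P.filter fun l => IsEndpointOf v l).card = 2) := by
  have : Nontrivial V := Fintype.one_lt_card_iff_nontrivial.1 (by omega)
  obtain ⟨P, hP⟩ := exists_isNiceSystemOn hG Finset.univ fun x _ =>
    (hconn.preconnected.exists_adj_of_nontrivial x).imp fun y hxy => ⟨Finset.mem_univ y, hxy⟩
  exact ⟨P, hP.stronglySeparating, hP.card_eq,
    fun e he => hP.card_edgeMemList e he (by simp), fun v => hP.card_isEndpointOf v (by simp)⟩
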